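/- arXiv:1402.0177 — 2 statements merged into one kernel-verified Lean document; each statement's English description precedes it below -/
import Mathlib

section
/- Every non-bipartite unicyclic connected graph has local metric dimension equal to 2. -/
/-!
Choose an edge `ab` that is not a bridge; it exists since `G`, being non-bipartite, has a cycle.
Then `T = G - ab` is connected with `|V| - 1` edges, hence a tree, and since `G` is not
bipartite, `a` and `b` get the same colour in the 2-colouring of `T`; so `d_T(x, a)` and
`d_T(x, b)` have the same parity for every `x`. A shortest path to `a` uses `ab` at most once,
as its last edge, so `d_G(x, a) = min (d_T(x, a)) (d_T(x, b) + 1)`, and symmetrically for `b`.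
Along an edge of `T` both `d_T(·, a)` and `d_T(·, b)` change by one, and these formulas show
that the pair `(d_G(·, a), d_G(·, b))` changes too; the edge `ab` itself is resolved by `a`.
So `{a, b}` is a local metric generator. A single vertex `w` is not one, since
`x ↦ d(x, w) mod 2` would then be a proper 2-colouring.
-/

open SimpleGraph

/-- A set `S` is a local metric generator for `G` if every pair of adjacent
vertices is distinguished, by distance, by some element of `S`. -/
def IsLocalMetricGenerator {V : Type*} (G : SimpleGraph V) (S : Set V) : Prop :=
  ∀ ⦃u v : V⦄, G.Adj u v → ∃ w ∈ S, G.dist u w ≠ G.dist v w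

/-- The local metric dimension of a graph. -/
noncomputable def localMetricDim {V : Type*} [Fintype V] (G : SimpleGraph V) : ℕ :=
  sInf {k | ∃ S : Finset V, IsLocalMetricGenerator G ↑S ∧ S.card = k}

/-- A local metric basis: a local metric generator of minimum cardinality. -/
def IsLocalMetricBasis {V : Type*} [Fintype V] (G : SimpleGraph V) (S : Finset V) : Prop :=
  IsLocalMetricGenerator G ↑S ∧ S.card = localMetricDim G

namespace SimpleGraph

variable {V : Type*} {G : SimpleGraph V}

lemma Coloring.even_dist_iff (c : G.Coloring Bool) {u v : V} (h : G.Reachable u v) :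
    Even (G.dist u v) ↔ (c u ↔ c v) := by
  obtain ⟨p, hp⟩ := h.exists_walk_length_eq_dist
  rw [← hp, c.even_length_iff_congr]

lemma Coloring.dist_eq_dist_add_one_of_adj (c : G.Coloring Bool) (hG : G.Connected) (u : V)
    {v w : V} (h : G.Adj v w) :
    G.dist v u = G.dist w u + 1 ∨ G.dist w u = G.dist v u + 1 := by
  have hodd : ¬ Even (G.dist v u + G.dist w u) := by
    rw [Nat.even_add, c.even_dist_iff (hG v u), c.even_dist_iff (hG w u)]
    have := c.valid h
    revert this
    cases c u <;> cases c v <;> cases c w <;> simp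
  have := h.diff_dist_adj (u := u)
  rw [SimpleGraph.dist_comm, SimpleGraph.dist_comm (u := u), Nat.even_iff] at *
  omega

variable {a b : V}

lemma min_dist_deleteEdges_le_length (hT : (G.deleteEdges {s(a, b)}).Connected) {x : V}
    (p : G.Walk x a) :
    min ((G.deleteEdges {s(a, b)}).dist x a) ((G.deleteEdges {s(a, b)}).dist x b + 1)
      ≤ p.length := by
  induction p with
  | nil => simp
  -- `induction` generalizes the endpoint `a` of `p`; the new endpoint takes over its name.
  | @cons x z a h q ih =>
    rw [Walk.length_cons]
    by_cases he : s(x, z) = s(a, b)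
    · rcases Sym2.eq_iff.mp he with ⟨rfl, rfl⟩ | ⟨rfl, rfl⟩ <;> simp
    · have hxz : (G.deleteEdges {s(a, b)}).Adj x z := by simp [h, he]
      have hxa := hxz.reachable.dist_triangle_left a
      have hxb := hxz.reachable.dist_triangle_left b
      rw [dist_eq_one_iff_adj.mpr hxz] at hxa hxb
      have := ih hT
      omega

lemma dist_eq_min_dist_deleteEdges (hab : G.Adj a b)
    (hT : (G.deleteEdges {s(a, b)}).Connected) (x : V) :
    G.dist x a =
      min ((G.deleteEdges {s(a, b)}).dist x a) ((G.deleteEdges {s(a, b)}).dist x b + 1) := by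
  have hle := deleteEdges_le (G := G) {s(a, b)}
  refine le_antisymm (le_min ((hT x a).dist_anti hle) ?_) ?_
  · calc G.dist x a ≤ G.dist x b + G.dist b a := hab.symm.reachable.dist_triangle_right x
      _ ≤ (G.deleteEdges {s(a, b)}).dist x b + 1 := by
        rw [dist_eq_one_iff_adj.mpr hab.symm]
        exact Nat.add_le_add_right ((hT x b).dist_anti hle) 1
  · obtain ⟨p, hp⟩ := ((hT x a).mono hle).exists_walk_length_eq_dist
    exact hp ▸ min_dist_deleteEdges_le_length hT p

lemma dist_eq_min_dist_deleteEdges' (hab : G.Adj a b)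
    (hT : (G.deleteEdges {s(a, b)}).Connected) (x : V) :
    G.dist x b =
      min ((G.deleteEdges {s(a, b)}).dist x b) ((G.deleteEdges {s(a, b)}).dist x a + 1) := by
  rw [Sym2.eq_swap] at hT ⊢
  exact dist_eq_min_dist_deleteEdges hab.symm hT x

lemma colorable_two_of_coloring_deleteEdges (c : (G.deleteEdges {s(a, b)}).Coloring Bool)
    (hc : c a ≠ c b) : G.Colorable 2 := by
  refine ⟨recolorOfEquiv G finTwoEquiv.symm (Coloring.mk c fun {x y} hxy => ?_)⟩
  by_cases he : s(x, y) = s(a, b)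
  · rcases Sym2.eq_iff.mp he with ⟨rfl, rfl⟩ | ⟨rfl, rfl⟩
    exacts [hc, hc.symm]
  · exact c.valid (by simp [hxy, he])

lemma isTree_deleteEdges_of_not_isBridge [Fintype V] [DecidableRel G.Adj] (hG : G.Connected)
    (hcard : G.edgeFinset.card = Fintype.card V) (hab : G.Adj a b) (hbr : ¬ G.IsBridge s(a, b)) :
    (G.deleteEdges {s(a, b)}).IsTree := by
  refine isTree_iff_connected_and_card.mpr ⟨hG.connected_delete_edge_of_not_isBridge hbr, ?_⟩
  have : 0 < Fintype.card V := Fintype.card_pos_iff.mpr ⟨a⟩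
  rw [edgeSet_deleteEdges, Nat.card_coe_set_eq,
    Set.ncard_sdiff_singleton_of_mem (G.mem_edgeSet.mpr hab), ← Nat.card_coe_set_eq,
    Nat.card_eq_fintype_card, ← edgeFinset_card, hcard,
    Nat.card_eq_fintype_card]
  omega

end SimpleGraph

section LocalMetricDimension

variable {V : Type*} {G : SimpleGraph V} {a b : V}

lemma isLocalMetricGenerator_pair_of_deleteEdges (hnb : ¬ G.Colorable 2) (hab : G.Adj a b)
    (hT : (G.deleteEdges {s(a, b)}).Connected) (hTb : (G.deleteEdges {s(a, b)}).Colorable 2) :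
    IsLocalMetricGenerator G {a, b} := by
  let c : (G.deleteEdges {s(a, b)}).Coloring Bool := recolorOfEquiv _ finTwoEquiv hTb.some
  have hcab : c a = c b := by_contra fun h => hnb (colorable_two_of_coloring_deleteEdges c h)
  have hpar (x : V) :
      ((G.deleteEdges {s(a, b)}).dist x a + (G.deleteEdges {s(a, b)}).dist x b) % 2 = 0 := by
    rw [← Nat.even_iff, Nat.even_add, c.even_dist_iff (hT x a), c.even_dist_iff (hT x b), hcab]
  have hdist_ab : G.dist b a = 1 := dist_eq_one_iff_adj.mpr hab.symm
  intro x y hxy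
  by_cases he : s(x, y) = s(a, b)
  · refine ⟨a, by simp, ?_⟩
    rcases Sym2.eq_iff.mp he with ⟨rfl, rfl⟩ | ⟨rfl, rfl⟩ <;> simp [hdist_ab]
  have hT_adj : (G.deleteEdges {s(a, b)}).Adj x y := by simp [hxy, he]
  by_contra! hsame
  have := hsame a (by simp)
  have := hsame b (by simp)
  have := dist_eq_min_dist_deleteEdges hab hT x
  have := dist_eq_min_dist_deleteEdges hab hT y
  have := dist_eq_min_dist_deleteEdges' hab hT x
  have := dist_eq_min_dist_deleteEdges' hab hT y
  have := c.dist_eq_dist_add_one_of_adj hT a hT_adj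
  have := c.dist_eq_dist_add_one_of_adj hT b hT_adj
  have := hpar x
  have := hpar y
  omega

lemma IsLocalMetricGenerator.two_le_card {S : Finset V} (hS : IsLocalMetricGenerator G S)
    (hnb : ¬ G.Colorable 2) : 2 ≤ S.card := by
  by_contra! hcard
  apply hnb
  rcases S.eq_empty_or_nonempty with rfl | hne
  · exact ⟨Coloring.mk (fun _ => 0) fun hxy => by simpa using hS hxy⟩
  obtain ⟨w, rfl⟩ := Finset.card_eq_one.mp (show S.card = 1 by have := hne.card_pos; omega)
  refine ⟨Coloring.mk (fun x => ⟨G.dist x w % 2, Nat.mod_lt _ two_pos⟩) fun {x y} hxy => ?_⟩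
  obtain ⟨_, hw, hdist⟩ := hS hxy
  rw [Finset.coe_singleton, Set.mem_singleton_iff] at hw
  rw [hw] at hdist
  have := hxy.diff_dist_adj (u := w)
  rw [SimpleGraph.dist_comm, SimpleGraph.dist_comm (u := w)] at this
  simp only [ne_eq, Fin.mk.injEq]
  omega

lemma localMetricDim_eq_card_of_forall_card_le [Fintype V] {S : Finset V}
    (hS : IsLocalMetricGenerator G S)
    (hmin : ∀ S' : Finset V, IsLocalMetricGenerator G S' → S.card ≤ S'.card) :
    localMetricDim G = S.card :=
  le_antisymm (Nat.sInf_le ⟨S, hS, rfl⟩)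
    (le_csInf ⟨_, S, hS, rfl⟩ fun _ ⟨S', hS', hcard⟩ => hcard ▸ hmin S' hS')

end LocalMetricDimension

/-- Every non-bipartite unicyclic connected graph (connected with exactly as many
edges as vertices) has local metric dimension 2. -/
theorem localMetricDim_unicyclic {V : Type*} [Fintype V] (G : SimpleGraph V)
    [DecidableRel G.Adj] (hG : G.Connected)
    (huni : G.edgeFinset.card = Fintype.card V) (hnb : ¬ G.Colorable 2) :
    localMetricDim G = 2 := by
  classical
  obtain ⟨a, b, hab, hbr⟩ : ∃ a b, G.Adj a b ∧ ¬ G.IsBridge s(a, b) := by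
    by_contra! h
    exact hnb (isAcyclic_iff_forall_adj_isBridge.mpr h).colorable_two
  have hT := isTree_deleteEdges_of_not_isBridge hG huni hab hbr
  have hgen : IsLocalMetricGenerator G ↑({a, b} : Finset V) := by
    rw [Finset.coe_pair]
    exact isLocalMetricGenerator_pair_of_deleteEdges hnb hab hT.connected hT.colorable_two
  have hcard : ({a, b} : Finset V).card = 2 := Finset.card_pair hab.ne
  rw [localMetricDim_eq_card_of_forall_card_le hgen fun S hS => hcard ▸ hS.two_le_card hnb, hcard]
end

section
/- Let H be a connected non-bipartite graph with root v, and G a connected graph of order n ≥ 2. If v does not belong to any local metric basis of H, then dim_l(G∘_v H) = n·dim_l(H). -/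
open SimpleGraph

/-- The rooted product G ∘_v H: a copy of H is attached at its root v to each
vertex of G. Vertex (g, v) plays the role of the g-th vertex of G. -/
def rootedProd {V W : Type*} (G : SimpleGraph V) (H : SimpleGraph W) (v : W) :
    SimpleGraph (V × W) :=
  SimpleGraph.fromRel (fun a b =>
    (a.1 = b.1 ∧ H.Adj a.2 b.2) ∨ (a.2 = v ∧ b.2 = v ∧ G.Adj a.1 b.1))

/-!
Distances in `G ∘_v H` are explicit: inside a copy of `H` they are the distances of `H`, and a
shortest path between two copies runs through both roots. So one copy of a local metric basis of
`H` per vertex of `G` is a local metric generator of the product; any of its vertices separates two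
adjacent roots. Conversely, for a local metric generator `S` of the product, the trace of `S` on
the `i`-th copy together with the root `v` is a local metric generator of `H`, because a vertex of
`S` outside the copy only sees the distance to `v`. Since `v` lies in no local metric basis of `H`,
each trace alone has at least `dim_l(H)` elements.
-/

theorem SimpleGraph.Walk.le_length_add {V : Type*} {G : SimpleGraph V} (f : V → ℕ)
    (hf : ∀ ⦃a b⦄, G.Adj a b → f a ≤ f b + 1) {a b : V} (p : G.Walk a b) :
    f a ≤ p.length + f b := by
  induction p with
  | nil => simp
  | cons h _ ih => have := hf h; simp only [length_cons]; omega

theorem SimpleGraph.Reachable.le_dist_add {V : Type*} {G : SimpleGraph V} (f : V → ℕ)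
    (hf : ∀ ⦃a b⦄, G.Adj a b → f a ≤ f b + 1) {a b : V} (hab : G.Reachable a b) :
    f a ≤ G.dist a b + f b := by
  obtain ⟨p, hp⟩ := hab.exists_walk_length_eq_dist
  exact hp ▸ p.le_length_add f hf

theorem Finset.card_eq_sum_card_preimage_prodMk {α β : Type*} [Fintype α]
    (S : Finset (α × β)) :
    S.card = ∑ i, (S.preimage (Prod.mk i) (Prod.mk_right_injective i).injOn).card := by
  classical
  rw [card_eq_sum_card_fiberwise (f := Prod.fst) (t := univ) (by simp)]
  refine sum_congr rfl fun i _ => ?_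
  rw [card_preimage]
  congr 1
  ext ⟨j, y⟩
  simp [eq_comm]

section IsLocalMetricGenerator

variable {α : Type*} {G : SimpleGraph α}

theorem IsLocalMetricGenerator.nonempty {S : Set α} (h : IsLocalMetricGenerator G S)
    (hG : G ≠ ⊥) : S.Nonempty := by
  obtain ⟨_, _, hxy⟩ := ne_bot_iff_exists_adj.mp hG
  obtain ⟨w, hw, -⟩ := h hxy
  exact ⟨w, hw⟩

theorem isLocalMetricGenerator_univ : IsLocalMetricGenerator G Set.univ := by
  intro u w h
  refine ⟨u, trivial, ?_⟩
  rw [dist_self]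
  exact (dist_ne_zero_iff_ne_and_reachable.mpr ⟨h.ne.symm, h.symm.reachable⟩).symm

variable [Fintype α]

theorem IsLocalMetricGenerator.localMetricDim_le {S : Finset α}
    (h : IsLocalMetricGenerator G S) : localMetricDim G ≤ S.card :=
  Nat.sInf_le ⟨S, h, rfl⟩

theorem exists_isLocalMetricBasis (G : SimpleGraph α) : ∃ B, IsLocalMetricBasis G B :=
  Nat.sInf_mem (s := {k | ∃ S : Finset α, IsLocalMetricGenerator G ↑S ∧ S.card = k})
    ⟨_, Finset.univ, by simpa using isLocalMetricGenerator_univ, rfl⟩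

theorem localMetricDim_le_card_of_isLocalMetricGenerator_insert [DecidableEq α] {v : α}
    (hv : ∀ B, IsLocalMetricBasis G B → v ∉ B) {T : Finset α}
    (hT : IsLocalMetricGenerator G ↑(insert v T)) : localMetricDim G ≤ T.card := by
  have hle := hT.localMetricDim_le
  by_cases hvT : v ∈ T
  · rwa [Finset.insert_eq_of_mem hvT] at hle
  by_contra! hlt
  rw [Finset.card_insert_of_notMem hvT] at hle
  exact hv _ ⟨hT, by rw [Finset.card_insert_of_notMem hvT]; omega⟩ (Finset.mem_insert_self v T)

end IsLocalMetricGenerator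

section rootedProd

variable {V W : Type*} {G : SimpleGraph V} {H : SimpleGraph W} {v : W}

theorem rootedProd_adj {i j : V} {x y : W} :
    (rootedProd G H v).Adj (i, x) (j, y) ↔
      (i = j ∧ H.Adj x y) ∨ (x = v ∧ y = v ∧ G.Adj i j) := by
  simp only [rootedProd, fromRel_adj, ne_eq, Prod.mk.injEq]
  aesop (add safe Adj.ne, safe Adj.symm)

variable (G H v)

def rootedProd.copy (i : V) : H →g rootedProd G H v where
  toFun x := (i, x)
  map_rel' h := rootedProd_adj.mpr (Or.inl ⟨rfl, h⟩)

def rootedProd.base : G →g rootedProd G H v where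
  toFun i := (i, v)
  map_rel' h := rootedProd_adj.mpr (Or.inr ⟨rfl, rfl, h⟩)

open Classical in
noncomputable def rootedProdDist (a b : V × W) : ℕ :=
  if a.1 = b.1 then H.dist a.2 b.2 else H.dist a.2 v + G.dist a.1 b.1 + H.dist v b.2

variable {G H v}

theorem rootedProdDist_self (a : V × W) : rootedProdDist G H v a a = 0 := by
  simp [rootedProdDist]

theorem rootedProdDist_same (i : V) (x y : W) :
    rootedProdDist G H v (i, x) (i, y) = H.dist x y := by
  simp [rootedProdDist]

theorem rootedProdDist_of_ne {i j : V} (hij : i ≠ j) (x y : W) :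
    rootedProdDist G H v (i, x) (j, y) = H.dist x v + G.dist i j + H.dist v y := by
  simp [rootedProdDist, hij]

theorem rootedProdDist_root (i j : V) (y : W) :
    rootedProdDist G H v (i, v) (j, y) = G.dist i j + H.dist v y := by
  by_cases hij : i = j
  · subst hij; simp [rootedProdDist]
  · simp [rootedProdDist, hij]

theorem exists_walk_rootedProd_copy (hH : H.Connected) (i : V) (x y : W) :
    ∃ p : (rootedProd G H v).Walk (i, x) (i, y), p.length = H.dist x y := by
  obtain ⟨p, hp⟩ := hH.exists_walk_length_eq_dist x y
  exact ⟨p.map (rootedProd.copy G H v i), (Walk.length_map _ p).trans hp⟩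

theorem exists_walk_rootedProd_base (hG : G.Connected) (i j : V) :
    ∃ p : (rootedProd G H v).Walk (i, v) (j, v), p.length = G.dist i j := by
  obtain ⟨p, hp⟩ := hG.exists_walk_length_eq_dist i j
  exact ⟨p.map (rootedProd.base G H v), (Walk.length_map _ p).trans hp⟩

theorem exists_walk_length_eq_rootedProdDist (hG : G.Connected) (hH : H.Connected)
    (a b : V × W) : ∃ p : (rootedProd G H v).Walk a b, p.length = rootedProdDist G H v a b := by
  obtain ⟨i, x⟩ := a
  obtain ⟨j, y⟩ := b
  by_cases hij : i = j
  · subst hij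
    simpa [rootedProdDist_same] using exists_walk_rootedProd_copy hH i x y
  · obtain ⟨p, hp⟩ := exists_walk_rootedProd_copy (G := G) hH i x v
    obtain ⟨q, hq⟩ := exists_walk_rootedProd_base (H := H) (v := v) hG i j
    obtain ⟨r, hr⟩ := exists_walk_rootedProd_copy (G := G) hH j v y
    refine ⟨p.append (q.append r), ?_⟩
    rw [Walk.length_append, Walk.length_append, hp, hq, hr, rootedProdDist_of_ne hij, add_assoc]

theorem rootedProdDist_le_of_adj (hG : G.Connected) (hH : H.Connected) {a b : V × W}
    (hab : (rootedProd G H v).Adj a b) (c : V × W) :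
    rootedProdDist G H v a c ≤ rootedProdDist G H v b c + 1 := by
  obtain ⟨i, x⟩ := a
  obtain ⟨j, y⟩ := b
  obtain ⟨k, z⟩ := c
  rcases rootedProd_adj.mp hab with ⟨rfl, hxy⟩ | ⟨rfl, rfl, hij⟩
  · have hxy_dist := dist_eq_one_iff_adj.mpr hxy
    by_cases hik : i = k
    · subst hik
      simp only [rootedProdDist_same]
      linarith [hH.dist_triangle (u := x) (v := y) (w := z)]
    · simp only [rootedProdDist_of_ne hik]
      linarith [hH.dist_triangle (u := x) (v := y) (w := v)]
  · simp only [rootedProdDist_root]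
    linarith [dist_eq_one_iff_adj.mpr hij, hG.dist_triangle (u := i) (v := j) (w := k)]

theorem dist_rootedProd (hG : G.Connected) (hH : H.Connected) (a b : V × W) :
    (rootedProd G H v).dist a b = rootedProdDist G H v a b := by
  obtain ⟨p, hp⟩ := exists_walk_length_eq_rootedProdDist hG hH a b
  refine le_antisymm (hp ▸ dist_le p) ?_
  simpa [rootedProdDist_self] using
    p.reachable.le_dist_add (rootedProdDist G H v · b)
      fun _ _ h => rootedProdDist_le_of_adj hG hH h b

theorem dist_rootedProd_same (hG : G.Connected) (hH : H.Connected) (i : V) (x y : W) :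
    (rootedProd G H v).dist (i, x) (i, y) = H.dist x y := by
  rw [dist_rootedProd hG hH, rootedProdDist_same]

theorem dist_rootedProd_of_ne (hG : G.Connected) (hH : H.Connected) {i j : V} (hij : i ≠ j)
    (x y : W) :
    (rootedProd G H v).dist (i, x) (j, y) = H.dist x v + G.dist i j + H.dist v y := by
  rw [dist_rootedProd hG hH, rootedProdDist_of_ne hij]

theorem IsLocalMetricGenerator.univ_prod (hG : G.Connected) (hH : H.Connected) {B : Set W}
    (hB : IsLocalMetricGenerator H B) (hB_ne : B.Nonempty) :
    IsLocalMetricGenerator (rootedProd G H v) (Set.univ ×ˢ B) := by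
  rintro ⟨i, x⟩ ⟨j, y⟩ hadj
  rcases rootedProd_adj.mp hadj with ⟨rfl, hxy⟩ | ⟨rfl, rfl, hij⟩
  · obtain ⟨b, hb, hd⟩ := hB hxy
    refine ⟨(i, b), ⟨trivial, hb⟩, ?_⟩
    rwa [dist_rootedProd_same hG hH, dist_rootedProd_same hG hH]
  · obtain ⟨b, hb⟩ := hB_ne
    refine ⟨(i, b), ⟨trivial, hb⟩, ?_⟩
    rw [dist_rootedProd_same hG hH, dist_rootedProd_of_ne hG hH hij.ne.symm, dist_self]
    have := hG.pos_dist_of_ne hij.ne.symm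
    omega

theorem IsLocalMetricGenerator.insert_root_fiber (hG : G.Connected) (hH : H.Connected)
    {S : Set (V × W)} (hS : IsLocalMetricGenerator (rootedProd G H v) S) (i : V) :
    IsLocalMetricGenerator H (insert v (Prod.mk i ⁻¹' S)) := by
  intro x y hxy
  have hadj : (rootedProd G H v).Adj (i, x) (i, y) := rootedProd_adj.mpr (Or.inl ⟨rfl, hxy⟩)
  obtain ⟨⟨j, b⟩, hjb, hd⟩ := hS hadj
  by_cases hij : i = j
  · subst hij
    exact ⟨b, Or.inr hjb, by rwa [dist_rootedProd_same hG hH, dist_rootedProd_same hG hH] at hd⟩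
  · refine ⟨v, Or.inl rfl, fun h => hd ?_⟩
    rw [dist_rootedProd_of_ne hG hH hij, dist_rootedProd_of_ne hG hH hij, h]

theorem card_mul_localMetricDim_le_card [Fintype V] [Fintype W] (hG : G.Connected)
    (hH : H.Connected) (hv : ∀ B, IsLocalMetricBasis H B → v ∉ B) {S : Finset (V × W)}
    (hS : IsLocalMetricGenerator (rootedProd G H v) S) :
    Fintype.card V * localMetricDim H ≤ S.card := by
  classical
  calc Fintype.card V * localMetricDim H = ∑ _i : V, localMetricDim H := by simp
    _ ≤ ∑ i, (S.preimage (Prod.mk i) (Prod.mk_right_injective i).injOn).card :=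
      Finset.sum_le_sum fun i _ => localMetricDim_le_card_of_isLocalMetricGenerator_insert hv
        (by simpa using hS.insert_root_fiber hG hH i)
    _ = S.card := S.card_eq_sum_card_preimage_prodMk.symm

end rootedProd

theorem localMetricDim_rootedProd_of_root_not_mem_general {V W : Type*} [Fintype V] [Fintype W]
    (G : SimpleGraph V) (H : SimpleGraph W) (v : W) (hG : G.Connected) (hH : H.Connected)
    (hnb : ¬ H.Colorable 2)
    (hv : ∀ B : Finset W, IsLocalMetricBasis H B → v ∉ B) :
    localMetricDim (rootedProd G H v) = Fintype.card V * localMetricDim H := by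
  obtain ⟨B, hB, hB_card⟩ := exists_isLocalMetricBasis H
  obtain ⟨S, hS, hS_card⟩ := exists_isLocalMetricBasis (rootedProd G H v)
  have hB_ne : (B : Set W).Nonempty :=
    hB.nonempty fun h => hnb ((colorable_one_iff.mpr h).mono one_le_two)
  refine le_antisymm ?_ (hS_card ▸ card_mul_localMetricDim_le_card hG hH hv hS)
  calc localMetricDim (rootedProd G H v) ≤ (Finset.univ ×ˢ B).card :=
        IsLocalMetricGenerator.localMetricDim_le (by simpa using hB.univ_prod hG hH hB_ne)
    _ = Fintype.card V * localMetricDim H := by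
        rw [Finset.card_product, hB_card, Finset.card_univ]

/-- If the root v belongs to no local metric basis of the connected non-bipartite
graph H, then dim_l(G ∘_v H) = n · dim_l(H). -/
theorem localMetricDim_rootedProd_of_root_not_mem {V W : Type*} [Fintype V] [Fintype W]
    (G : SimpleGraph V) (H : SimpleGraph W) (v : W) (hG : G.Connected) (hH : H.Connected)
    (hnb : ¬ H.Colorable 2) (hn : 2 ≤ Fintype.card V)
    (hv : ∀ B : Finset W, IsLocalMetricBasis H B → v ∉ B) :
    localMetricDim (rootedProd G H v) = Fintype.card V * localMetricDim H :=
  localMetricDim_rootedProd_of_root_not_mem_general G H v hG hH hnb hv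
end
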